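/- Let f, g_1,…,g_m ∈ ℝ[X] have integer coefficients and degrees at most d, set g_0 := 1 and S := {x ∈ ℝⁿ : g_1(x) ≥ 0,…,g_m(x) ≥ 0}, and assume S is nonempty, compact, contained in [−1,1]ⁿ, has nonempty interior, and Q(S) is archimedean. Assume f(x) > 0 for all x ∈ S. Then there exist an even integer D = 2k and a positive integer N such that, with ε := 1/2^N, the polynomial f − ε·Σ_{α∈ℕⁿ, |α|≤k} X^{2α} belongs to the D-truncated quadratic module generated by g_1,…,g_m together with the polynomials 1 − X^{2α} for |α| ≤ k; that is, there exist sums of squares σ_0,…,σ_m and (σ_α)_{|α|≤k} in ℝ[X], with deg(σ_j g_j) ≤ D for all j and deg(σ_α·(1 − X^{2α})) ≤ D for all |α| ≤ k, such that f − ε·Σ_{|α|≤k} X^{2α} = Σ_{j=0}^m σ_j g_j + Σ_{|α|≤k} σ_α·(1 − X^{2α}). -/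

import Mathlib

/-!
Putinar's Positivstellensatz, proved in the style of Kadison–Dubois for an archimedean
quadratic module `M` in an `ℝ`-algebra. If `-1 ∉ M`, a maximal proper quadratic module `Q ⊇ M`
is total (`Q ∪ -Q` is everything), and `a ↦ sup {r | a - r ∈ Q}` is then an `ℝ`-algebra
homomorphism to `ℝ`, nonnegative on `M`; on polynomials it is evaluation at a point of `S`.
Applied to `M + Σ² · (-f)` this gives `s f = 1 + q` with `s` a sum of squares and `q ∈ M`, and a
supremum argument turns this into `f - c ∈ M` for some `c > 0`. For the truncated certificate
take `k` at least the degrees in this representation, `ε` with `ε · #{α : |α| ≤ k} ≤ c`, and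
`σ_α := ε`.
-/

open MvPolynomial

noncomputable section

/-- `f` is a sum of squares of polynomials. -/
def IsSOS {n : ℕ} (f : MvPolynomial (Fin n) ℝ) : Prop :=
  ∃ (r : ℕ) (s : Fin r → MvPolynomial (Fin n) ℝ), f = ∑ i, (s i) ^ 2

/-- Membership in the quadratic module generated by `g_1,…,g_m` (with `g_0 := 1`). -/
def InQM {n m : ℕ} (g : Fin m → MvPolynomial (Fin n) ℝ) (f : MvPolynomial (Fin n) ℝ) : Prop :=
  ∃ σ0 : MvPolynomial (Fin n) ℝ, ∃ σ : Fin m → MvPolynomial (Fin n) ℝ,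
    IsSOS σ0 ∧ (∀ j, IsSOS (σ j)) ∧ f = σ0 + ∑ j, σ j * g j

open scoped algebraMap

namespace algebraMap

variable {A : Type*} [Semiring A] [Algebra ℝ A]

theorem coe_inv_mul_cancel {r : ℝ} (hr : r ≠ 0) : ((r⁻¹ : ℝ) : A) * r = 1 := by
  rw [← coe_mul, inv_mul_cancel₀ hr, coe_one]

theorem coe_inv_mul_ofNat (k : ℕ) [k.AtLeastTwo] :
    (((OfNat.ofNat k : ℝ)⁻¹ : ℝ) : A) * OfNat.ofNat k = 1 := by
  rw [← map_ofNat (algebraMap ℝ A) k]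
  exact coe_inv_mul_cancel (OfNat.ofNat_ne_zero _)

end algebraMap

theorem IsSumSq.coe {A : Type*} [Semiring A] [Algebra ℝ A] {r : ℝ} (hr : 0 ≤ r) :
    IsSumSq (r : A) := by
  simpa [← algebraMap.coe_mul, Real.mul_self_sqrt hr] using IsSumSq.mul_self (√r : A)

structure IsQuadraticModule {A : Type*} [CommRing A] (Q : Set A) : Prop where
  add_mem {a b : A} : a ∈ Q → b ∈ Q → a + b ∈ Q
  mul_self_mul_mem (p : A) {a : A} : a ∈ Q → p * p * a ∈ Q
  one_mem : (1 : A) ∈ Q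

namespace IsQuadraticModule

variable {A : Type*} [CommRing A] {Q : Set A} (hQ : IsQuadraticModule Q)
include hQ

theorem mul_self_mem (p : A) : p * p ∈ Q := by
  simpa using hQ.mul_self_mul_mem p hQ.one_mem

theorem zero_mem : (0 : A) ∈ Q := by
  simpa using hQ.mul_self_mem 0

theorem isSumSq_mul_mem {s a : A} (hs : IsSumSq s) (ha : a ∈ Q) : s * a ∈ Q := by
  induction hs with
  | zero => simpa using hQ.zero_mem
  | sq_add p _ ih => simpa only [add_mul] using hQ.add_mem (hQ.mul_self_mul_mem p ha) ih

theorem isSumSq_mem {s : A} (hs : IsSumSq s) : s ∈ Q := by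
  simpa using hQ.isSumSq_mul_mem hs hQ.one_mem

variable [Algebra ℝ A]

theorem coe_mul_mem {r : ℝ} (hr : 0 ≤ r) {a : A} (ha : a ∈ Q) : (r : A) * a ∈ Q :=
  hQ.isSumSq_mul_mem (.coe hr) ha

theorem coe_mem {r : ℝ} (hr : 0 ≤ r) : (r : A) ∈ Q :=
  hQ.isSumSq_mem (.coe hr)

theorem coe_mem_iff (hQ₁ : (-1 : A) ∉ Q) {r : ℝ} : (r : A) ∈ Q ↔ 0 ≤ r := by
  refine ⟨fun hr => ?_, hQ.coe_mem⟩
  by_contra! hneg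
  apply hQ₁
  have := hQ.coe_mul_mem (inv_nonneg.mpr (neg_nonneg.mpr hneg.le)) hr
  rwa [← algebraMap.coe_mul, inv_neg, neg_mul, inv_mul_cancel₀ hneg.ne, algebraMap.coe_neg,
    algebraMap.coe_one] at this

theorem mul_mem_of_add_eq {u v : A} (hu : u ∈ Q) (hv : v ∈ Q) {κ : ℝ} (hκ : 0 < κ)
    (huv : u + v = κ) : u * v ∈ Q := by
  have key : u * v = ((κ⁻¹ : ℝ) : A) * (u * u * v + v * v * u) := by
    linear_combination (-(u * v)) * algebraMap.coe_inv_mul_cancel (A := A) hκ.ne' -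
      ((κ⁻¹ : ℝ) : A) * u * v * huv
  rw [key]
  exact hQ.coe_mul_mem (inv_nonneg.mpr hκ.le)
    (hQ.add_mem (hQ.mul_self_mul_mem u hv) (hQ.mul_self_mul_mem v hu))

theorem sq_sub_mul_self_mem {r : ℝ} (hr : 0 < r) {a : A} (h₁ : (r : A) - a ∈ Q)
    (h₂ : (r : A) + a ∈ Q) : ((r ^ 2 : ℝ) : A) - a * a ∈ Q := by
  have := hQ.mul_mem_of_add_eq h₁ h₂ (by positivity : (0 : ℝ) < r + r) (by push_cast; ring)
  convert this using 1
  push_cast; ring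

theorem mul_mem_of_mem_of_neg_mem {s : A} (hs : s ∈ Q) (hs' : -s ∈ Q) (b : A) : s * b ∈ Q := by
  have key : s * b = ((4⁻¹ : ℝ) : A) * ((b + 1) * (b + 1) * s + (b - 1) * (b - 1) * -s) := by
    linear_combination (-(s * b)) * algebraMap.coe_inv_mul_ofNat (A := A) 4
  rw [key]
  exact hQ.coe_mul_mem (by norm_num)
    (hQ.add_mem (hQ.mul_self_mul_mem _ hs) (hQ.mul_self_mul_mem _ hs'))

theorem eq_univ_of_neg_one_mem (h : (-1 : A) ∈ Q) : Q = Set.univ :=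
  Set.eq_univ_of_forall fun a => by
    simpa using hQ.mul_mem_of_mem_of_neg_mem h (by simpa using hQ.one_mem) (-a)

end IsQuadraticModule

theorem mul_mem_of_forall_mul_self_mem {A : Type*} [CommRing A] [Algebra ℝ A] {S : Set A}
    (add_mem : ∀ {a b}, a ∈ S → b ∈ S → a + b ∈ S)
    (coe_mul_mem : ∀ (c : ℝ) {a}, a ∈ S → (c : A) * a ∈ S)
    (mul_self_mem : ∀ {a}, a ∈ S → a * a ∈ S) {a b : A} (ha : a ∈ S) (hb : b ∈ S) :
    a * b ∈ S := by
  have key : a * b = ((4⁻¹ : ℝ) : A) * ((a + b) * (a + b)) +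
      ((-4⁻¹ : ℝ) : A) * ((a + (-1 : ℝ) * b) * (a + (-1 : ℝ) * b)) := by
    push_cast
    linear_combination (-(a * b)) * algebraMap.coe_inv_mul_ofNat (A := A) 4
  rw [key]
  exact add_mem (coe_mul_mem _ (mul_self_mem (add_mem ha hb)))
    (coe_mul_mem _ (mul_self_mem (add_mem ha (coe_mul_mem _ hb))))

section Bounded

variable {A : Type*} [CommRing A] [Algebra ℝ A] {Q : Set A}

def IsBoundedBy (Q : Set A) (r : ℝ) (a : A) : Prop :=
  (r : A) - a ∈ Q ∧ (r : A) + a ∈ Q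

namespace IsBoundedBy

variable (hQ : IsQuadraticModule Q)
include hQ

theorem coe (c : ℝ) : IsBoundedBy Q |c| (c : A) := by
  constructor
  · rw [← algebraMap.coe_sub]; exact hQ.coe_mem (sub_nonneg.mpr (le_abs_self c))
  · rw [← algebraMap.coe_add]; exact hQ.coe_mem (neg_le_iff_add_nonneg.mp (neg_le_abs c))

theorem mono {r s : ℝ} {a : A} (ha : IsBoundedBy Q r a) (hrs : r ≤ s) : IsBoundedBy Q s a := by
  have hst := hQ.coe_mem (sub_nonneg.mpr hrs)
  constructor
  · convert hQ.add_mem hst ha.1 using 1; push_cast; ring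
  · convert hQ.add_mem hst ha.2 using 1; push_cast; ring

theorem add {r s : ℝ} {a b : A} (ha : IsBoundedBy Q r a) (hb : IsBoundedBy Q s b) :
    IsBoundedBy Q (r + s) (a + b) := by
  constructor
  · convert hQ.add_mem ha.1 hb.1 using 1; push_cast; ring
  · convert hQ.add_mem ha.2 hb.2 using 1; push_cast; ring

omit hQ in
theorem neg {r : ℝ} {a : A} (ha : IsBoundedBy Q r a) : IsBoundedBy Q r (-a) :=
  ⟨by simpa using ha.2, by simpa [← sub_eq_add_neg] using ha.1⟩

theorem coe_mul (c : ℝ) {r : ℝ} {a : A} (ha : IsBoundedBy Q r a) :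
    IsBoundedBy Q (|c| * r) (c * a) := by
  wlog hc : 0 ≤ c generalizing c
  · simpa using (this (-c) (by linarith)).neg
  rw [abs_of_nonneg hc]
  constructor
  · convert hQ.coe_mul_mem hc ha.1 using 1; push_cast; ring
  · convert hQ.coe_mul_mem hc ha.2 using 1; push_cast; ring

theorem mul_self {r : ℝ} (hr : 0 < r) {a : A} (ha : IsBoundedBy Q r a) :
    IsBoundedBy Q (r ^ 2) (a * a) :=
  ⟨hQ.sq_sub_mul_self_mem hr ha.1 ha.2,
    hQ.add_mem (hQ.coe_mem (by positivity)) (hQ.mul_self_mem a)⟩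

/-- `(r + 1)/2 ± a = ((r - a²) + (a ± 1)²) / 2`. -/
theorem of_sub_mul_self_mem {r : ℝ} {a : A} (h : (r : A) - a * a ∈ Q) :
    IsBoundedBy Q (2⁻¹ * (r + 1)) a := by
  have half_mul_mem {b : A} := hQ.coe_mul_mem (a := b) (inv_nonneg.mpr zero_le_two)
  constructor
  · convert half_mul_mem (hQ.add_mem h (hQ.mul_self_mem (a - 1))) using 1
    push_cast
    linear_combination a * algebraMap.coe_inv_mul_ofNat (A := A) 2
  · convert half_mul_mem (hQ.add_mem h (hQ.mul_self_mem (a + 1))) using 1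
    push_cast
    linear_combination (-a) * algebraMap.coe_inv_mul_ofNat (A := A) 2

end IsBoundedBy

variable (Q) in
def boundedSubalgebra (hQ : IsQuadraticModule Q) : Subalgebra ℝ A where
  carrier := {a | ∃ r, IsBoundedBy Q r a}
  add_mem' := fun ⟨_, ha⟩ ⟨_, hb⟩ => ⟨_, ha.add hQ hb⟩
  mul_mem' := mul_mem_of_forall_mul_self_mem (S := {a | ∃ r, IsBoundedBy Q r a})
    (fun ⟨_, ha⟩ ⟨_, hb⟩ => ⟨_, ha.add hQ hb⟩) (fun c _ ⟨_, ha⟩ => ⟨_, ha.coe_mul hQ c⟩)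
    fun ⟨r, ha⟩ => ⟨_, (ha.mono hQ (le_abs_self r |>.trans (lt_add_one _).le)).mul_self hQ
      (by positivity)⟩
  algebraMap_mem' c := ⟨_, IsBoundedBy.coe hQ c⟩

def IsArchimedeanQM (Q : Set A) : Prop :=
  ∀ a : A, ∃ r : ℝ, (r : A) - a ∈ Q

theorem isArchimedeanQM_of_boundedSubalgebra_eq_top (hQ : IsQuadraticModule Q)
    (h : boundedSubalgebra Q hQ = ⊤) : IsArchimedeanQM Q := fun a => by
  obtain ⟨r, hr, -⟩ : ∃ r, IsBoundedBy Q r a := by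
    change a ∈ boundedSubalgebra Q hQ; simp [h]
  exact ⟨r, hr⟩

end Bounded

section Character

variable {A : Type*} [CommRing A] [Algebra ℝ A] {Q : Set A}

def infinitesimals (Q : Set A) : Set A :=
  {u | ∀ ε : ℝ, 0 < ε → IsBoundedBy Q ε u}

def character (Q : Set A) (a : A) : ℝ :=
  sSup {r : ℝ | a - r ∈ Q}

namespace IsQuadraticModule

variable (hQ : IsQuadraticModule Q)
include hQ

theorem zero_mem_infinitesimals : (0 : A) ∈ infinitesimals Q := fun ε hε => by
  simpa using (IsBoundedBy.coe hQ 0).mono hQ (by simpa using hε.le)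

theorem add_mem_infinitesimals {u v : A} (hu : u ∈ infinitesimals Q)
    (hv : v ∈ infinitesimals Q) : u + v ∈ infinitesimals Q := fun ε hε => by
  simpa using (hu (ε / 2) (by positivity)).add hQ (hv (ε / 2) (by positivity))

theorem coe_mul_mem_infinitesimals (c : ℝ) {u : A} (hu : u ∈ infinitesimals Q) :
    (c : A) * u ∈ infinitesimals Q := fun ε hε => by
  rcases eq_or_ne c 0 with rfl | hc
  · simpa using hQ.zero_mem_infinitesimals ε hε
  · simpa [mul_div_cancel₀ _ (abs_ne_zero.mpr hc)] using
      (hu (ε / |c|) (by positivity)).coe_mul hQ c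

theorem mul_self_mem_infinitesimals {u : A} (hu : u ∈ infinitesimals Q) :
    u * u ∈ infinitesimals Q := fun ε hε => by
  simpa [Real.sq_sqrt hε.le] using (hu √ε (by positivity)).mul_self hQ (by positivity)

theorem mul_mem_infinitesimals {u v : A} (hu : u ∈ infinitesimals Q)
    (hv : v ∈ infinitesimals Q) : u * v ∈ infinitesimals Q :=
  mul_mem_of_forall_mul_self_mem hQ.add_mem_infinitesimals hQ.coe_mul_mem_infinitesimals
    hQ.mul_self_mem_infinitesimals hu hv

theorem eq_zero_of_coe_mem_infinitesimals (hQ₁ : (-1 : A) ∉ Q) {r : ℝ}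
    (hr : (r : A) ∈ infinitesimals Q) : r = 0 := by
  by_contra hr₀
  obtain ⟨h₁, h₂⟩ := hr (|r| / 2) (by positivity)
  rw [← algebraMap.coe_sub, hQ.coe_mem_iff hQ₁] at h₁
  rw [← algebraMap.coe_add, hQ.coe_mem_iff hQ₁] at h₂
  have := abs_pos.mpr hr₀
  cases abs_cases r <;> linarith

variable (hQ₁ : (-1 : A) ∉ Q) (harch : IsArchimedeanQM Q)
include hQ₁ harch

theorem bddAbove_setOf_sub_mem (a : A) : BddAbove {r : ℝ | a - r ∈ Q} := by
  obtain ⟨R, hR⟩ := harch a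
  refine ⟨R, fun r hr => ?_⟩
  have := hQ.add_mem hR hr
  rwa [sub_add_sub_cancel, ← algebraMap.coe_sub, hQ.coe_mem_iff hQ₁, sub_nonneg] at this

omit hQ hQ₁ in
theorem nonempty_setOf_sub_mem (a : A) : {r : ℝ | a - r ∈ Q}.Nonempty := by
  obtain ⟨R, hR⟩ := harch (-a)
  exact ⟨-R, by simpa [add_comm] using hR⟩

theorem le_character {a : A} {r : ℝ} (h : a - r ∈ Q) : r ≤ character Q a :=
  le_csSup (hQ.bddAbove_setOf_sub_mem hQ₁ harch a) h

theorem character_nonneg {a : A} (ha : a ∈ Q) : 0 ≤ character Q a :=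
  hQ.le_character hQ₁ harch (by simpa using ha)

omit hQ₁ in
theorem sub_mem_of_lt_character {a : A} {r : ℝ} (h : r < character Q a) : a - r ∈ Q := by
  obtain ⟨l, hl, hrl⟩ := exists_lt_of_lt_csSup (nonempty_setOf_sub_mem harch a) h
  convert hQ.add_mem hl (hQ.coe_mem (sub_nonneg.mpr hrl.le)) using 1
  push_cast; ring

variable (htotal : ∀ a : A, a ∈ Q ∨ -a ∈ Q)
include htotal

theorem sub_character_mem_infinitesimals (a : A) : a - character Q a ∈ infinitesimals Q := by
  intro ε hε
  constructor
  · have hnot : a - ↑(character Q a + ε) ∉ Q := fun h => by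
      linarith [hQ.le_character hQ₁ harch h]
    convert (htotal _).resolve_left hnot using 1
    push_cast; ring
  · convert hQ.sub_mem_of_lt_character harch (r := character Q a - ε) (by linarith) using 1
    push_cast; ring

theorem character_eq_of_sub_mem_infinitesimals {a : A} {c : ℝ} (h : a - c ∈ infinitesimals Q) :
    character Q a = c := by
  have := hQ.add_mem_infinitesimals h
    (hQ.coe_mul_mem_infinitesimals (-1) (hQ.sub_character_mem_infinitesimals hQ₁ harch htotal a))
  rw [← sub_eq_zero]
  refine hQ.eq_zero_of_coe_mem_infinitesimals hQ₁ ?_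
  convert this using 1
  push_cast; ring

theorem character_coe (c : ℝ) : character Q (c : A) = c :=
  hQ.character_eq_of_sub_mem_infinitesimals hQ₁ harch htotal
    (by simpa using hQ.zero_mem_infinitesimals)

theorem character_add (a b : A) : character Q (a + b) = character Q a + character Q b := by
  refine hQ.character_eq_of_sub_mem_infinitesimals hQ₁ harch htotal ?_
  convert hQ.add_mem_infinitesimals (hQ.sub_character_mem_infinitesimals hQ₁ harch htotal a)
    (hQ.sub_character_mem_infinitesimals hQ₁ harch htotal b) using 1
  push_cast; ring

theorem character_mul (a b : A) : character Q (a * b) = character Q a * character Q b := by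
  refine hQ.character_eq_of_sub_mem_infinitesimals hQ₁ harch htotal ?_
  have ha := hQ.sub_character_mem_infinitesimals hQ₁ harch htotal a
  have hb := hQ.sub_character_mem_infinitesimals hQ₁ harch htotal b
  convert hQ.add_mem_infinitesimals (hQ.mul_mem_infinitesimals ha hb)
    (hQ.add_mem_infinitesimals (hQ.coe_mul_mem_infinitesimals (character Q a) hb)
      (hQ.coe_mul_mem_infinitesimals (character Q b) ha)) using 1
  push_cast; ring

def characterAlgHom : A →ₐ[ℝ] ℝ where
  toFun := character Q
  map_one' := by simpa using hQ.character_coe hQ₁ harch htotal 1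
  map_mul' := hQ.character_mul hQ₁ harch htotal
  map_zero' := by simpa using hQ.character_coe hQ₁ harch htotal 0
  map_add' := hQ.character_add hQ₁ harch htotal
  commutes' := hQ.character_coe hQ₁ harch htotal

end IsQuadraticModule

end Character

section Extension

variable {A : Type*} [CommRing A] {Q : Set A}

def adjoinQM (Q : Set A) (b : A) : Set A :=
  {y | ∃ q ∈ Q, ∃ s, IsSumSq s ∧ y = q + s * b}

theorem subset_adjoinQM (b : A) : Q ⊆ adjoinQM Q b :=
  fun y hy => ⟨y, hy, 0, .zero, by ring⟩

namespace IsQuadraticModule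

variable (hQ : IsQuadraticModule Q)
include hQ

theorem mem_adjoinQM_self (b : A) : b ∈ _root_.adjoinQM Q b :=
  ⟨0, hQ.zero_mem, 1, .one, by ring⟩

theorem adjoinQM (b : A) : IsQuadraticModule (_root_.adjoinQM Q b) where
  add_mem := by
    rintro _ _ ⟨q₁, hq₁, s₁, hs₁, rfl⟩ ⟨q₂, hq₂, s₂, hs₂, rfl⟩
    exact ⟨q₁ + q₂, hQ.add_mem hq₁ hq₂, s₁ + s₂, hs₁.add hs₂, by ring⟩
  mul_self_mul_mem := by
    rintro p _ ⟨q, hq, s, hs, rfl⟩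
    exact ⟨p * p * q, hQ.mul_self_mul_mem p hq, p * p * s, (IsSumSq.mul_self p).mul hs,
      by ring⟩
  one_mem := subset_adjoinQM b hQ.one_mem

/-- If neither `b` nor `-b` can be adjoined without making `-1` a member, then already
`-1 ∈ Q`: with `-1 = q₁ + s₁ b = q₂ - s₂ b` one gets `±s₁ ∈ Q`, hence `s₁ b ∈ Q`. -/
theorem mem_or_neg_mem_of_maximal [Algebra ℝ A]
    (hmax : Maximal (fun P => IsQuadraticModule P ∧ (-1 : A) ∉ P) Q) (b : A) :
    b ∈ Q ∨ -b ∈ Q := by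
  have hQ₁ := hmax.prop.2
  have neg_one_mem (c : A) (hc : c ∉ Q) : (-1 : A) ∈ _root_.adjoinQM Q c := by
    by_contra h
    exact hc <|
      hmax.eq_of_subset ⟨hQ.adjoinQM c, h⟩ (subset_adjoinQM c) ▸ hQ.mem_adjoinQM_self c
  by_contra! hb
  obtain ⟨q₁, hq₁, s₁, hs₁, h₁⟩ := neg_one_mem b hb.1
  obtain ⟨q₂, hq₂, s₂, hs₂, h₂⟩ := neg_one_mem (-b) hb.2
  have hs₁' : -s₁ ∈ Q := by
    have key : -s₁ = s₂ + (s₂ * q₁ + s₁ * q₂) := by linear_combination s₂ * h₁ + s₁ * h₂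
    rw [key]
    exact hQ.add_mem (hQ.isSumSq_mem hs₂)
      (hQ.add_mem (hQ.isSumSq_mul_mem hs₂ hq₁) (hQ.isSumSq_mul_mem hs₁ hq₂))
  exact hQ₁ (h₁ ▸ hQ.add_mem hq₁ (hQ.mul_mem_of_mem_of_neg_mem (hQ.isSumSq_mem hs₁) hs₁' b))

end IsQuadraticModule

theorem IsQuadraticModule.sUnion {C : Set (Set A)} (hC : ∀ Q ∈ C, IsQuadraticModule Q)
    (hchain : IsChain (· ⊆ ·) C) (hne : C.Nonempty) : IsQuadraticModule (⋃₀ C) where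
  add_mem := by
    rintro a b ⟨Qa, hQa, ha⟩ ⟨Qb, hQb, hb⟩
    rcases hchain.total hQa hQb with h | h
    · exact ⟨Qb, hQb, (hC Qb hQb).add_mem (h ha) hb⟩
    · exact ⟨Qa, hQa, (hC Qa hQa).add_mem ha (h hb)⟩
  mul_self_mul_mem := by
    rintro p a ⟨Qa, hQa, ha⟩
    exact ⟨Qa, hQa, (hC Qa hQa).mul_self_mul_mem p ha⟩
  one_mem := by
    obtain ⟨Q, hQ⟩ := hne
    exact ⟨Q, hQ, (hC Q hQ).one_mem⟩

theorem IsQuadraticModule.exists_maximal_superset (hQ : IsQuadraticModule Q)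
    (hQ₁ : (-1 : A) ∉ Q) :
    ∃ P, Q ⊆ P ∧ Maximal (fun P => IsQuadraticModule P ∧ (-1 : A) ∉ P) P := by
  refine zorn_subset_nonempty _ (fun C hC hchain hne => ?_) Q ⟨hQ, hQ₁⟩
  refine ⟨⋃₀ C, ⟨.sUnion (fun P hP => (hC hP).1) hchain hne, ?_⟩,
    fun P hP => Set.subset_sUnion_of_mem hP⟩
  rintro ⟨P, hP, h⟩
  exact (hC hP).2 h

end Extension

theorem IsQuadraticModule.exists_algHom_nonneg {A : Type*} [CommRing A] [Algebra ℝ A]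
    {M : Set A} (hM : IsQuadraticModule M) (hM₁ : (-1 : A) ∉ M) (harch : IsArchimedeanQM M) :
    ∃ φ : A →ₐ[ℝ] ℝ, ∀ a ∈ M, 0 ≤ φ a := by
  obtain ⟨Q, hMQ, hmax⟩ := hM.exists_maximal_superset hM₁
  obtain ⟨hQ, hQ₁⟩ := hmax.prop
  have harchQ : IsArchimedeanQM Q := fun a => (harch a).imp fun _ h => hMQ h
  exact ⟨hQ.characterAlgHom hQ₁ harchQ (hQ.mem_or_neg_mem_of_maximal hmax),
    fun a ha => hQ.character_nonneg hQ₁ harchQ (hMQ ha)⟩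

namespace IsQuadraticModule

variable {A : Type*} [CommRing A] [Algebra ℝ A] {M : Set A} (hM : IsQuadraticModule M)
  (harch : IsArchimedeanQM M)
include hM harch

theorem exists_isSumSq_mul_eq_one_add {f : A}
    (hf : ∀ φ : A →ₐ[ℝ] ℝ, (∀ a ∈ M, 0 ≤ φ a) → 0 < φ f) :
    ∃ s q, IsSumSq s ∧ q ∈ M ∧ s * f = 1 + q := by
  by_contra! h
  have hM₁ : (-1 : A) ∉ _root_.adjoinQM M (-f) := by
    rintro ⟨q, hq, s, hs, hsf⟩
    exact h s q hs hq (by linear_combination hsf)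
  obtain ⟨φ, hφ⟩ := (hM.adjoinQM (-f)).exists_algHom_nonneg hM₁
    fun a => (harch a).imp fun _ h => subset_adjoinQM _ h
  have hφf := hφ _ (hM.mem_adjoinQM_self (-f))
  rw [map_neg] at hφf
  linarith [hf φ fun a ha => hφ a (subset_adjoinQM _ ha)]

/-- From `s h = 1 + q` and `N ± s ∈ M`: `N² h² - 1 = h² (N² - s²) + 2 q + q² ∈ M`. -/
theorem exists_mul_self_sub_mem {s q h : A} (hs : IsSumSq s) (hq : q ∈ M)
    (hsh : s * h = 1 + q) :
    ∃ η : ℝ, 0 < η ∧ h * h - ((η ^ 2 : ℝ) : A) ∈ M := by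
  obtain ⟨N₀, hN₀⟩ := harch s
  set N := max N₀ 1
  have hN : 0 < N := lt_max_of_lt_right one_pos
  have hNs : (N : A) - s ∈ M := by
    convert hM.add_mem hN₀ (hM.coe_mem (sub_nonneg.mpr (le_max_left N₀ 1))) using 1
    push_cast; ring
  have hNs' : (N : A) + s ∈ M := by
    convert hM.add_mem hNs (hM.add_mem (hM.isSumSq_mem hs) (hM.isSumSq_mem hs)) using 1; ring
  have hkey : ((N ^ 2 : ℝ) : A) * (h * h) - 1 ∈ M := by
    convert hM.add_mem (hM.mul_self_mul_mem h (hM.sq_sub_mul_self_mem hN hNs hNs'))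
      (hM.add_mem (hM.add_mem hq hq) (hM.mul_self_mem q)) using 1
    linear_combination (s * h + 1 + q) * hsh
  refine ⟨N⁻¹, inv_pos.mpr hN, ?_⟩
  convert hM.coe_mul_mem (sq_nonneg N⁻¹) hkey using 1
  push_cast
  linear_combination (-(h * h)) * ((N⁻¹ : ℝ) * (N : A) + 1) *
    algebraMap.coe_inv_mul_cancel (A := A) hN.ne'

omit harch in
/-- `(K - δ) (h - c) = (h + δ) (K - h) + (h² - η²)`, where both summands lie in `M`. -/
theorem sub_mem_of_mul_self_sub_mem {h : A} {η K δ : ℝ} (hK : (K : A) - h ∈ M)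
    (hδ : h + δ ∈ M) (hη : h * h - ((η ^ 2 : ℝ) : A) ∈ M) (hδ₀ : 0 < δ) (hδK : δ < K) :
    h - (((η ^ 2 - δ * K) / (K - δ) : ℝ) : A) ∈ M := by
  have hprod := hM.mul_mem_of_add_eq hδ hK (by linarith : 0 < δ + K) (by push_cast; ring)
  convert hM.coe_mul_mem (inv_nonneg.mpr (sub_nonneg.mpr hδK.le)) (hM.add_mem hprod hη) using 1
  have hinv := algebraMap.coe_inv_mul_cancel (A := A) (sub_ne_zero.mpr hδK.ne')
  rw [div_eq_inv_mul]
  push_cast at hinv ⊢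
  linear_combination (-h) * hinv

/-- `l := character M f` is the supremum of the `r` with `f - r ∈ M`. If `l ≤ 0`, then
`exists_mul_self_sub_mem` and `sub_mem_of_mul_self_sub_mem` applied to `h = f - l` put
`f - (l + c)` in `M` for some `c > 0`. -/
theorem exists_sub_coe_mem_of_algHom_pos {f : A}
    (hf : ∀ φ : A →ₐ[ℝ] ℝ, (∀ a ∈ M, 0 ≤ φ a) → 0 < φ f) :
    ∃ c : ℝ, 0 < c ∧ f - (c : A) ∈ M := by
  by_cases hM₁ : (-1 : A) ∈ M
  · exact ⟨1, one_pos, by simp [hM.eq_univ_of_neg_one_mem hM₁]⟩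
  set l := character M f
  rcases lt_or_ge 0 l with hl | hl
  · exact ⟨l / 2, half_pos hl, hM.sub_mem_of_lt_character harch (half_lt_self hl)⟩
  exfalso
  obtain ⟨s, q, hs, hq, hsf⟩ := hM.exists_isSumSq_mul_eq_one_add harch hf
  have hq' : q + ((-l : ℝ) : A) * s ∈ M :=
    hM.add_mem hq (hM.coe_mul_mem (neg_nonneg.mpr hl) (hM.isSumSq_mem hs))
  obtain ⟨η, hη, hηM⟩ := hM.exists_mul_self_sub_mem harch hs hq' (h := f - l)
    (by push_cast; linear_combination hsf)
  obtain ⟨K₀, hK₀⟩ := harch (f - l)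
  set K := max K₀ η
  have hK : (K : A) - (f - l) ∈ M := by
    convert hM.add_mem hK₀ (hM.coe_mem (sub_nonneg.mpr (le_max_left K₀ η))) using 1
    push_cast; ring
  have hηK : η ≤ K := le_max_right K₀ η
  set δ := η ^ 2 / (2 * K)
  have hδ₀ : 0 < δ := by positivity
  have hδK : δ < K := by
    rw [div_lt_iff₀ (by positivity)]; nlinarith
  have hδM : f - l + δ ∈ M := by
    convert hM.sub_mem_of_lt_character harch (r := l - δ) (by linarith) using 1
    push_cast; ring
  have hδη : δ * K = η ^ 2 / 2 := by
    have : K ≠ 0 := by positivity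
    unfold δ; field_simp
  have hc : 0 < (η ^ 2 - δ * K) / (K - δ) := div_pos (by nlinarith) (by linarith)
  have hfc := hM.sub_mem_of_mul_self_sub_mem hK hδM hηM hδ₀ hδK
  set c := (η ^ 2 - δ * K) / (K - δ)
  have hlc := hM.le_character hM₁ harch (a := f) (r := l + c) (by
    convert hfc using 1; push_cast; ring)
  linarith

end IsQuadraticModule

section Polynomial

variable {ι : Type*} [Fintype ι]

def quadraticModuleOf {A : Type*} [CommRing A] (g : ι → A) : Set A :=
  {p | ∃ (σ₀ : A) (σ : ι → A), IsSumSq σ₀ ∧ (∀ j, IsSumSq (σ j)) ∧ p = σ₀ + ∑ j, σ j * g j}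

theorem isQuadraticModule_quadraticModuleOf {A : Type*} [CommRing A] (g : ι → A) :
    IsQuadraticModule (quadraticModuleOf g) where
  add_mem := by
    rintro _ _ ⟨s₀, s, hs₀, hs, rfl⟩ ⟨t₀, t, ht₀, ht, rfl⟩
    refine ⟨s₀ + t₀, s + t, hs₀.add ht₀, fun j => (hs j).add (ht j), ?_⟩
    simp only [Pi.add_apply, add_mul, Finset.sum_add_distrib]; ring
  mul_self_mul_mem := by
    rintro p _ ⟨s₀, s, hs₀, hs, rfl⟩
    refine ⟨p * p * s₀, fun j => p * p * s j, (IsSumSq.mul_self p).mul hs₀,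
      fun j => (IsSumSq.mul_self p).mul (hs j), ?_⟩
    simp only [mul_add, Finset.mul_sum, mul_assoc]
  one_mem := ⟨1, 0, .one, fun _ => .zero, by simp⟩

theorem mem_quadraticModuleOf {A : Type*} [CommRing A] [DecidableEq ι] (g : ι → A) (j : ι) :
    g j ∈ quadraticModuleOf g :=
  ⟨0, Pi.single j 1, .zero, fun i => by rcases eq_or_ne i j with rfl | h <;> simp [*],
    by simp [Pi.single_apply]⟩

variable {σ : Type*} [Fintype σ]

theorem isArchimedeanQM_of_natCast_sub_sum_sq_mem {Q : Set (MvPolynomial σ ℝ)}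
    (hQ : IsQuadraticModule Q) {N : ℕ} (hN : (N : MvPolynomial σ ℝ) - ∑ i, X i ^ 2 ∈ Q) :
    IsArchimedeanQM Q := by
  classical
  refine isArchimedeanQM_of_boundedSubalgebra_eq_top hQ (eq_top_iff.mpr ?_)
  rw [← adjoin_range_X, Algebra.adjoin_le_iff, Set.range_subset_iff]
  intro i
  refine ⟨_, IsBoundedBy.of_sub_mul_self_mem hQ (r := N) ?_⟩
  convert hQ.add_mem hN (hQ.isSumSq_mem (IsSumSq.sum_sq (Finset.univ.erase i) X)) using 1
  rw [← Finset.add_sum_erase _ _ (Finset.mem_univ i)]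
  push_cast; ring

theorem exists_sub_C_mem_quadraticModuleOf {g : ι → MvPolynomial σ ℝ}
    (harch : ∃ N : ℕ, (N : MvPolynomial σ ℝ) - ∑ i, X i ^ 2 ∈ quadraticModuleOf g)
    {f : MvPolynomial σ ℝ} (hf : ∀ x, (∀ j, 0 ≤ eval x (g j)) → 0 < eval x f) :
    ∃ c : ℝ, 0 < c ∧ f - C c ∈ quadraticModuleOf g := by
  classical
  have hQ := isQuadraticModule_quadraticModuleOf g
  obtain ⟨N, hN⟩ := harch
  rw [← algebraMap_eq]
  refine hQ.exists_sub_coe_mem_of_algHom_pos (isArchimedeanQM_of_natCast_sub_sum_sq_mem hQ hN)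
    fun φ hφ => ?_
  have hφX (p : MvPolynomial σ ℝ) : φ p = eval (φ ∘ X) p :=
    DFunLike.congr_fun (aeval_unique φ) p
  rw [hφX]
  exact hf _ fun j => hφX (g j) ▸ hφ _ (mem_quadraticModuleOf g j)

end Polynomial

theorem isSOS_iff_isSumSq {n : ℕ} (f : MvPolynomial (Fin n) ℝ) : IsSOS f ↔ IsSumSq f := by
  refine ⟨fun ⟨r, s, hs⟩ => hs ▸ IsSumSq.sum_sq _ s, fun h => ?_⟩
  induction h with
  | zero => exact ⟨0, Fin.elim0, by simp⟩
  | sq_add a _ ih =>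
    obtain ⟨r, s, rfl⟩ := ih
    exact ⟨r + 1, Fin.cons a s, by simp [Fin.sum_univ_succ, sq]⟩

theorem inQM_iff {n m : ℕ} {g : Fin m → MvPolynomial (Fin n) ℝ} {f : MvPolynomial (Fin n) ℝ} :
    InQM g f ↔ f ∈ quadraticModuleOf g := by
  simp only [InQM, quadraticModuleOf, isSOS_iff_isSumSq, Set.mem_ofPred_eq]

theorem totalDegree_C_mul_one_sub_monomial_add_le {σ : Type*} (r : ℝ) (α : σ →₀ ℕ) :
    (C r * (1 - monomial (α + α) (1 : ℝ))).totalDegree ≤ 2 * α.degree := by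
  refine (totalDegree_mul _ _).trans ?_
  rw [totalDegree_C, zero_add]
  refine (totalDegree_sub _ _).trans (max_le (by simp) ?_)
  refine (totalDegree_monomial_le _ _).trans_eq ?_
  rw [two_mul, ← map_add]
  rfl

theorem exists_one_div_two_pow_mul_le {c : ℝ} (hc : 0 < c) (M : ℝ) :
    ∃ N : ℕ, 0 < N ∧ 1 / 2 ^ N * M ≤ c := by
  obtain ⟨N, hN⟩ := pow_unbounded_of_one_lt (M / c) one_lt_two
  refine ⟨N + 1, N.succ_pos, ?_⟩
  rw [div_mul_eq_mul_div, one_mul, div_le_iff₀ (by positivity), ← div_le_iff₀' hc]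
  exact hN.le.trans (pow_le_pow_right₀ one_le_two N.le_succ)

theorem stmt_16_general {n m : ℕ}
    (f : MvPolynomial (Fin n) ℝ) (g : Fin m → MvPolynomial (Fin n) ℝ)
    (S : Set (Fin n → ℝ)) (hS : S = {x | ∀ j, 0 ≤ eval x (g j)})
    (harch : ∃ N : ℕ, InQM g ((N : MvPolynomial (Fin n) ℝ) - ∑ i, (X i) ^ 2))
    (hfpos : ∀ x ∈ S, 0 < eval x f) :
    ∃ k N : ℕ, 0 < N ∧
      ∃ Nk : Finset (Fin n →₀ ℕ),
        (∀ α : Fin n →₀ ℕ, α ∈ Nk ↔ (∑ i, α i) ≤ k) ∧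
        ∃ σ0 : MvPolynomial (Fin n) ℝ, ∃ σ : Fin m → MvPolynomial (Fin n) ℝ,
          ∃ σa : (Fin n →₀ ℕ) → MvPolynomial (Fin n) ℝ,
            IsSOS σ0 ∧ σ0.totalDegree ≤ 2 * k ∧
            (∀ j, IsSOS (σ j) ∧ (σ j * g j).totalDegree ≤ 2 * k) ∧
            (∀ α ∈ Nk, IsSOS (σa α) ∧
              (σa α * ((1 : MvPolynomial (Fin n) ℝ) - monomial (α + α) (1 : ℝ))).totalDegree
                ≤ 2 * k) ∧
            f - ((1 : ℝ) / 2 ^ N) • (∑ α ∈ Nk, monomial (α + α) (1 : ℝ)) =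
              σ0 + (∑ j, σ j * g j) +
              ∑ α ∈ Nk, σa α * ((1 : MvPolynomial (Fin n) ℝ) - monomial (α + α) (1 : ℝ)) := by
  obtain ⟨c, hc, σ₀, σ, hσ₀, hσ, hfc⟩ := exists_sub_C_mem_quadraticModuleOf
    (harch.imp fun _ => inQM_iff.mp) fun x hx => hfpos x (hS ▸ hx)
  set k := max σ₀.totalDegree (Finset.univ.sup fun j => (σ j * g j).totalDegree)
  have hσ₀k : σ₀.totalDegree ≤ k := le_max_left _ _
  have hσk (j : Fin m) : (σ j * g j).totalDegree ≤ k :=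
    (Finset.le_sup (f := fun j => (σ j * g j).totalDegree) (Finset.mem_univ j)).trans
      (le_max_right _ _)
  set Nk := (Finsupp.finite_of_degree_le (σ := Fin n) k).toFinset
  have hNk (α : Fin n →₀ ℕ) : α ∈ Nk ↔ ∑ i, α i ≤ k := by
    simp [Nk, Finsupp.degree_eq_sum]
  obtain ⟨N, hN, hNc⟩ := exists_one_div_two_pow_mul_le hc Nk.card
  set ε : ℝ := 1 / 2 ^ N
  refine ⟨k, N, hN, Nk, hNk, σ₀ + C (c - ε * Nk.card), σ, fun _ => C ε,
    (isSOS_iff_isSumSq _).mpr (hσ₀.add (.coe (by linarith))),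
    (totalDegree_add _ _).trans (max_le (by omega) (by rw [totalDegree_C]; omega)),
    fun j => ⟨(isSOS_iff_isSumSq _).mpr (hσ j), by linarith [hσk j]⟩,
    fun α hα => ⟨(isSOS_iff_isSumSq _).mpr (.coe (by positivity)), ?_⟩, ?_⟩
  · refine (totalDegree_C_mul_one_sub_monomial_add_le ε α).trans ?_
    rw [Finsupp.degree_eq_sum]
    linarith [(hNk α).mp hα]
  · rw [smul_eq_C_mul, ← Finset.mul_sum, Finset.sum_sub_distrib, Finset.sum_const, nsmul_one,
      map_sub, map_mul, map_natCast]
    linear_combination hfc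

theorem stmt_16 {n m : ℕ} (hn : 1 ≤ n) (d : ℕ)
    (f : MvPolynomial (Fin n) ℝ) (g : Fin m → MvPolynomial (Fin n) ℝ)
    (hfint : ∀ σ, ∃ z : ℤ, f.coeff σ = (z : ℝ))
    (hgint : ∀ j, ∀ σ, ∃ z : ℤ, (g j).coeff σ = (z : ℝ))
    (hfdeg : f.totalDegree ≤ d) (hgdeg : ∀ j, (g j).totalDegree ≤ d)
    (S : Set (Fin n → ℝ)) (hS : S = {x | ∀ j, 0 ≤ eval x (g j)})
    (hSne : S.Nonempty) (hScpt : IsCompact S)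
    (hScube : S ⊆ Set.Icc (-1 : Fin n → ℝ) 1)
    (hSint : (interior S).Nonempty)
    (harch : ∃ N : ℕ, InQM g ((N : MvPolynomial (Fin n) ℝ) - ∑ i, (X i) ^ 2))
    (hfpos : ∀ x ∈ S, 0 < eval x f) :
    ∃ k N : ℕ, 0 < N ∧
      ∃ Nk : Finset (Fin n →₀ ℕ),
        (∀ α : Fin n →₀ ℕ, α ∈ Nk ↔ (∑ i, α i) ≤ k) ∧
        ∃ σ0 : MvPolynomial (Fin n) ℝ, ∃ σ : Fin m → MvPolynomial (Fin n) ℝ,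
          ∃ σa : (Fin n →₀ ℕ) → MvPolynomial (Fin n) ℝ,
            IsSOS σ0 ∧ σ0.totalDegree ≤ 2 * k ∧
            (∀ j, IsSOS (σ j) ∧ (σ j * g j).totalDegree ≤ 2 * k) ∧
            (∀ α ∈ Nk, IsSOS (σa α) ∧
              (σa α * ((1 : MvPolynomial (Fin n) ℝ) - monomial (α + α) (1 : ℝ))).totalDegree
                ≤ 2 * k) ∧
            f - ((1 : ℝ) / 2 ^ N) • (∑ α ∈ Nk, monomial (α + α) (1 : ℝ)) =
              σ0 + (∑ j, σ j * g j) +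
              ∑ α ∈ Nk, σa α * ((1 : MvPolynomial (Fin n) ℝ) - monomial (α + α) (1 : ℝ)) :=
  stmt_16_general f g S hS harch hfpos
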